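/- arXiv:1711.00221 — 2 statements merged into one kernel-verified Lean document; each statement's English description precedes it below -/
import Mathlib

section
/- For real numbers x, x', ν and ξ > 0, the Gaussian integral ∫_ℝ exp(−λ²(x − x')²/2) · (1/√(2πξ)) exp(−(λ − ν)²/(2ξ)) dλ equals (ξ(x − x')² + 1)^{−1/2} exp(−ν²(x − x')²/(2(ξ(x − x')² + 1))). -/
/-!
Multiplying the two Gaussian factors and completing the square in `λ` leaves
`exp (-ν² d / (2 (ξ d + 1)))` times an unnormalised Gaussian in `λ` of precision
`(ξ d + 1) / ξ`, where `d = (x - x')²`; the Gaussian integral of the latter is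
`√(2 π ξ / (ξ d + 1))`, and the normalisation `1 / √(2 π ξ)` turns this into `(ξ d + 1)^(-1/2)`.
-/

open MeasureTheory Real

theorem integral_exp_neg_mul_sub_sq (b m : ℝ) :
    ∫ x : ℝ, exp (-b * (x - m) ^ 2) = √(π / b) :=
  (integral_sub_right_eq_self (fun x ↦ exp (-b * x ^ 2)) m).trans (integral_gaussian b)

theorem exp_mul_exp_eq_exp_mul_exp_neg_mul_sub_sq {d ξ : ℝ} (hξ : ξ ≠ 0)
    (hdξ : ξ * d + 1 ≠ 0) (l ν : ℝ) :
    exp (-l ^ 2 * d / 2) * exp (-(l - ν) ^ 2 / (2 * ξ)) =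
      exp (-ν ^ 2 * d / (2 * (ξ * d + 1)))
        * exp (-((ξ * d + 1) / (2 * ξ)) * (l - ν / (ξ * d + 1)) ^ 2) := by
  rw [← exp_add, ← exp_add]
  congr 1
  -- Writing `ν = (ξ d + 1) m` removes the nested denominator, which `field_simp` fails to clear.
  obtain ⟨m, rfl⟩ : ∃ m, ν = (ξ * d + 1) * m := ⟨ν / (ξ * d + 1), (mul_div_cancel₀ ν hdξ).symm⟩
  rw [mul_div_cancel_left₀ m hdξ]
  field_simp
  ring

theorem integral_exp_mul_exp_neg_sub_sq {d ξ : ℝ} (hξ : ξ ≠ 0) (hdξ : ξ * d + 1 ≠ 0)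
    (ν : ℝ) :
    ∫ l : ℝ, exp (-l ^ 2 * d / 2) * exp (-(l - ν) ^ 2 / (2 * ξ)) =
      √(2 * π * ξ / (ξ * d + 1)) * exp (-ν ^ 2 * d / (2 * (ξ * d + 1))) := by
  simp_rw [exp_mul_exp_eq_exp_mul_exp_neg_mul_sub_sq hξ hdξ, integral_const_mul,
    integral_exp_neg_mul_sub_sq]
  rw [mul_comm, div_div_eq_mul_div, mul_comm π, mul_right_comm]

theorem one_div_sqrt_mul_sqrt_div {a b : ℝ} (ha : 0 < a) (hb : 0 ≤ b) :
    1 / √a * √(a / b) = b ^ (-(1 : ℝ) / 2) := by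
  rw [neg_div, rpow_neg hb, ← sqrt_eq_rpow, sqrt_div' _ hb]
  field_simp

/-- Expected prior covariance of a squared-exponential kernel under a Gaussian `N(ν, ξ)`
over the inverted length-scale:
`∫ exp(−λ²(x−x')²/2) N(λ|ν,ξ) dλ
  = (ξ(x−x')² + 1)^{−1/2} exp(−ν²(x−x')²/(2(ξ(x−x')² + 1)))`. -/
theorem gaussian_integral_prior_kernel (x x' ν ξ : ℝ) (hξ : 0 < ξ) :
    ∫ l : ℝ, Real.exp (-l ^ 2 * (x - x') ^ 2 / 2)
        * ((1 / Real.sqrt (2 * π * ξ)) * Real.exp (-(l - ν) ^ 2 / (2 * ξ)))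
      = (ξ * (x - x') ^ 2 + 1) ^ (-(1:ℝ)/2)
        * Real.exp (-ν ^ 2 * (x - x') ^ 2 / (2 * (ξ * (x - x') ^ 2 + 1))) := by
  have hdξ : 0 < ξ * (x - x') ^ 2 + 1 := by positivity
  simp_rw [mul_left_comm (exp _), integral_const_mul]
  rw [integral_exp_mul_exp_neg_sub_sq hξ.ne' hdξ.ne', ← mul_assoc,
    one_div_sqrt_mul_sqrt_div (by positivity) hdξ.le]
end

section
/- For real numbers x, x', z, z', ν and ξ > 0, the product of two Gaussian kernel factors has expected value under λ ~ N(ν, ξ): ∫_ℝ exp(−(λx − z)²/2) exp(−(λx' − z')²/2) · (1/√(2πξ)) exp(−(λ − ν)²/(2ξ)) dλ = (ξ(x² + x'²) + 1)^{−1/2} exp(−[ξ(z'x − zx')² + (xν − z)² + (x'ν − z')²] / (2(ξ(x² + x'²) + 1))). -/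
/-!
Multiplying the two kernel factors gives `exp (-(a/2) λ² + c λ - e/2)` with `a = x² + x'²`,
`c = x z + x' z'`, `e = z² + z'²`; against the `N(ν, ξ)` density the exponent stays quadratic in
`λ`, so completing the square reduces the integral to the Gaussian integral. The closed form of
the exponent then comes from Lagrange's identity `a e - c² = (z' x - z x')²`.
-/

open MeasureTheory Real

theorem integral_exp_quadratic {b : ℝ} (hb : 0 < b) (c d : ℝ) :
    ∫ x : ℝ, exp (-b * x ^ 2 + c * x + d) = √(π / b) * exp (d + c ^ 2 / (4 * b)) := by
  have h_square : ∀ x : ℝ, exp (-b * x ^ 2 + c * x + d)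
      = exp (-b * (x - c / (2 * b)) ^ 2) * exp (d + c ^ 2 / (4 * b)) := by
    intro x
    rw [← exp_add]
    congr 1
    field_simp
    ring
  simp_rw [h_square]
  rw [integral_mul_const, integral_sub_right_eq_self (fun x ↦ exp (-b * x ^ 2)),
    integral_gaussian]

theorem integral_exp_quadratic_mul_gaussian_density {ξ a : ℝ} (hξ : 0 < ξ)
    (ha : 0 < ξ * a + 1) (c ν : ℝ) :
    ∫ l : ℝ, exp (-a / 2 * l ^ 2 + c * l)
        * ((1 / √(2 * π * ξ)) * exp (-(l - ν) ^ 2 / (2 * ξ)))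
      = (ξ * a + 1) ^ (-(1 : ℝ) / 2)
        * exp ((ξ * c ^ 2 + 2 * c * ν - a * ν ^ 2) / (2 * (ξ * a + 1))) := by
  have hb : 0 < (ξ * a + 1) / (2 * ξ) := by positivity
  have h_combine : ∀ l : ℝ,
      exp (-a / 2 * l ^ 2 + c * l) * ((1 / √(2 * π * ξ)) * exp (-(l - ν) ^ 2 / (2 * ξ)))
        = (1 / √(2 * π * ξ))
          * exp (-((ξ * a + 1) / (2 * ξ)) * l ^ 2 + (c + ν / ξ) * l + -ν ^ 2 / (2 * ξ)) := by
    intro l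
    rw [mul_left_comm, ← exp_add]
    congr 2
    field_simp
    ring
  have h_sqrt : 1 / √(2 * π * ξ) * √(π / ((ξ * a + 1) / (2 * ξ)))
      = (ξ * a + 1) ^ (-(1 : ℝ) / 2) := by
    rw [show π / ((ξ * a + 1) / (2 * ξ)) = 2 * π * ξ / (ξ * a + 1) by field_simp,
      sqrt_div (by positivity), neg_div, rpow_neg ha.le, sqrt_eq_rpow, sqrt_eq_rpow]
    have : (2 * π * ξ) ^ (1 / 2 : ℝ) ≠ 0 := by positivity
    field_simp
  have h_exponent : -ν ^ 2 / (2 * ξ) + (c + ν / ξ) ^ 2 / (4 * ((ξ * a + 1) / (2 * ξ)))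
      = (ξ * c ^ 2 + 2 * c * ν - a * ν ^ 2) / (2 * (ξ * a + 1)) := by
    rw [div_add_div _ _ (by positivity) (by positivity),
      div_eq_div_iff (by positivity) (by positivity)]
    field_simp
    ring
  simp_rw [h_combine]
  rw [integral_const_mul, integral_exp_quadratic hb, ← mul_assoc, h_sqrt, h_exponent]

/-- Expectation of the product of two squared-exponential kernel factors under a
Gaussian `N(ν, ξ)` over the inverted length-scale `λ`:
`∫ exp(−(λx − z)²/2) exp(−(λx' − z')²/2) N(λ|ν,ξ) dλ
 = (ξ(x² + x'²) + 1)^{−1/2}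
   exp(−[ξ(z'x − zx')² + (xν − z)² + (x'ν − z')²] / (2(ξ(x² + x'²) + 1)))`. -/
theorem gaussian_integral_product_kernel (x x' z z' ν ξ : ℝ) (hξ : 0 < ξ) :
    ∫ l : ℝ, Real.exp (-(l * x - z) ^ 2 / 2) * Real.exp (-(l * x' - z') ^ 2 / 2)
        * ((1 / Real.sqrt (2 * π * ξ)) * Real.exp (-(l - ν) ^ 2 / (2 * ξ)))
      = (ξ * (x ^ 2 + x' ^ 2) + 1) ^ (-(1:ℝ)/2)
        * Real.exp (-(ξ * (z' * x - z * x') ^ 2 + (x * ν - z) ^ 2 + (x' * ν - z') ^ 2)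
            / (2 * (ξ * (x ^ 2 + x' ^ 2) + 1))) := by
  have ha : 0 < ξ * (x ^ 2 + x' ^ 2) + 1 := by positivity
  have h_kernels : ∀ l : ℝ, exp (-(l * x - z) ^ 2 / 2) * exp (-(l * x' - z') ^ 2 / 2)
      = exp (-(x ^ 2 + x' ^ 2) / 2 * l ^ 2 + (x * z + x' * z') * l)
        * exp (-(z ^ 2 + z' ^ 2) / 2) := by
    intro l
    rw [← exp_add, ← exp_add]
    congr 1
    ring
  simp_rw [h_kernels, mul_right_comm _ (exp _), integral_mul_const,
    integral_exp_quadratic_mul_gaussian_density hξ ha, mul_assoc, ← exp_add]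
  congr 2
  field_simp
  ring
end
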